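/- arXiv:2511.04462 — 4 statements merged into one kernel-verified Lean document; each statement's English description precedes it below -/
import Mathlib

section
/- Let d ≥ 2, n ≥ d+1, p ≥ 2, and let H = (Z_p)^{n+1}/⟨(1,...,1)⟩ with canonical generators φ_1,...,φ_{n+1}. Suppose K ≤ H satisfies: K contains no nontrivial element of the form φ_{i_1}^{l_1}⋯φ_{i_j}^{l_j} with 1 ≤ j ≤ d, 1 ≤ i_1 < ⋯ < i_j ≤ n+1, and l_1,...,l_j ∈ {1,...,p-1}, and H/K ≅ (Z_p)^m. Then m ≥ d. -/
open scoped BigOperators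

/-- Vectors of length `n+1` over `ZMod p`. -/
abbrev GFVec (p n : ℕ) := Fin (n + 1) → ZMod p

/-- The subgroup generated by the constant vector `(1,...,1)`. -/
def diagSub (p n : ℕ) : AddSubgroup (GFVec p n) :=
  AddSubgroup.zmultiples (fun _ => (1 : ZMod p))

/-- The group `H = (Z_p)^{n+1} / ⟨(1,...,1)⟩`. -/
abbrev GFGroup (p n : ℕ) := GFVec p n ⧸ diagSub p n

/-- The canonical generator `φ_i`, the image of the `i`-th standard basis vector. -/
def gen (p n : ℕ) (i : Fin (n + 1)) : GFGroup p n :=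
  QuotientAddGroup.mk (Pi.single i (1 : ZMod p))

/-- An element of `H` is forbidden (acts with fixed points) if it is a nontrivial-looking
product `φ_{i_1}^{l_1} ⋯ φ_{i_j}^{l_j}` with `1 ≤ j ≤ d`, distinct indices and
exponents `l_t ≢ 0 (mod p)`. -/
def IsForbidden (p n d : ℕ) (x : GFGroup p n) : Prop :=
  ∃ (s : Finset (Fin (n + 1))) (l : Fin (n + 1) → ZMod p),
    s.Nonempty ∧ s.card ≤ d ∧ (∀ i ∈ s, l i ≠ 0) ∧
    x = QuotientAddGroup.mk (fun i => if i ∈ s then l i else 0)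

/-!
Vectors supported on a fixed set `s` of `d` coordinates, with one coordinate `i₀` left out, form
a group of order `p^d`. If `m < d`, the map from this group to `H/K ≅ (Z_p)^m` has a nonzero
vector `v` in its kernel. The class of `v` lies in `K` and is a product of at most `d` generator
powers, hence trivial in `H`; so `v` is constant, and since `v i₀ = 0` it vanishes.
-/

def Finset.extendByZero {ι R : Type*} [DecidableEq ι] [AddZeroClass R] (s : Finset ι) :
    (s → R) →+ (ι → R) where
  toFun z i := if h : i ∈ s then z ⟨i, h⟩ else 0
  map_zero' := by
    funext i
    split_ifs <;> rfl
  map_add' z w := by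
    funext i
    split_ifs <;> simp_all

lemma Finset.extendByZero_injective {ι R : Type*} [DecidableEq ι] [AddZeroClass R] (s : Finset ι) :
    Function.Injective (s.extendByZero (R := R)) := by
  intro z w h
  funext ⟨i, hi⟩
  simpa [Finset.extendByZero, hi] using congrFun h i

lemma AddMonoidHom.exists_ne_zero_supported_map_eq_zero {ι R B : Type*} [DecidableEq ι]
    [AddGroup R] [AddGroup B] [Finite B] (f : (ι → R) →+ B) (s : Finset ι)
    (hcard : Nat.card B < Nat.card R ^ s.card) :
    ∃ v : ι → R, v ≠ 0 ∧ (∀ i ∉ s, v i = 0) ∧ f v = 0 := by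
  have hnotinj : ¬ Function.Injective (f.comp s.extendByZero) := fun hinj => by
    have := Nat.card_le_card_of_injective _ hinj
    rw [Nat.card_fun, Nat.card_eq_fintype_card (α := s), Fintype.card_coe] at this
    omega
  simp only [injective_iff_map_eq_zero, not_forall] at hnotinj
  obtain ⟨z, hfz, hz⟩ := hnotinj
  refine ⟨s.extendByZero z, ?_, fun i hi => by simp [Finset.extendByZero, hi], hfz⟩
  rwa [Ne, ← map_zero s.extendByZero, (Finset.extendByZero_injective s).eq_iff]

lemma isForbidden_mk {p n d : ℕ} {v : GFVec p n} {s : Finset (Fin (n + 1))} (hv : v ≠ 0)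
    (hsupp : ∀ i ∉ s, v i = 0) (hs : s.card ≤ d) :
    IsForbidden p n d (QuotientAddGroup.mk v) := by
  classical
  refine ⟨Finset.univ.filter (v · ≠ 0), v, ?_, ?_, fun i hi => (Finset.mem_filter.mp hi).2, ?_⟩
  · obtain ⟨i, hi⟩ := Function.ne_iff.mp hv
    exact ⟨i, by simpa using hi⟩
  · refine le_trans (Finset.card_le_card fun i hi => ?_) hs
    by_contra his
    exact (Finset.mem_filter.mp hi).2 (hsupp i his)
  · congr 1
    funext i
    by_cases hi : v i = 0 <;> simp [hi]

lemma eq_zero_of_mk_eq_zero {p n : ℕ} {v : GFVec p n} {i₀ : Fin (n + 1)} (hi₀ : v i₀ = 0)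
    (hv : (QuotientAddGroup.mk v : GFGroup p n) = 0) : v = 0 := by
  obtain ⟨k, rfl⟩ := AddSubgroup.mem_zmultiples_iff.mp ((QuotientAddGroup.eq_zero_iff v).mp hv)
  funext i
  simpa using hi₀

theorem stmt_2_general (d p n m : ℕ) (hp : 2 ≤ p) (hn : d + 1 ≤ n)
    (K : AddSubgroup (GFGroup p n))
    (hfree : ∀ x ∈ K, IsForbidden p n d x → x = 0)
    (hquot : Nonempty ((GFGroup p n ⧸ K) ≃+ (Fin m → ZMod p))) :
    d ≤ m := by
  by_contra! hlt
  have : NeZero p := ⟨by omega⟩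
  obtain ⟨e⟩ := hquot
  obtain ⟨s, hs, hsd⟩ := Finset.exists_subset_card_eq (s := Finset.univ.erase (Fin.last n))
    (n := d) (by simp; omega)
  have hcard : Nat.card (GFGroup p n ⧸ K) < Nat.card (ZMod p) ^ s.card := by
    rw [Nat.card_congr e.toEquiv, Nat.card_fun, Nat.card_zmod, Nat.card_fin, hsd]
    exact Nat.pow_lt_pow_right (by omega) hlt
  obtain ⟨v, hv, hsupp, hKv⟩ := ((QuotientAddGroup.mk' K).comp
    (QuotientAddGroup.mk' (diagSub p n))).exists_ne_zero_supported_map_eq_zero s hcard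
  have hmem : (QuotientAddGroup.mk v : GFGroup p n) ∈ K := (QuotientAddGroup.eq_zero_iff _).mp hKv
  have hlast : v (Fin.last n) = 0 := hsupp _ fun h => by simpa using hs h
  exact hv (eq_zero_of_mk_eq_zero hlast (hfree _ hmem (isForbidden_mk hv hsupp hsd.le)))

/-- if `K ≤ H` avoids all nontrivial products of at most `d` generator
powers and `H/K ≅ (Z_p)^m`, then `m ≥ d`. -/
theorem stmt_2 (d p n m : ℕ) (hd : 2 ≤ d) (hp : 2 ≤ p) (hn : d + 1 ≤ n)
    (K : AddSubgroup (GFGroup p n))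
    (hfree : ∀ x ∈ K, IsForbidden p n d x → x = 0)
    (hquot : Nonempty ((GFGroup p n ⧸ K) ≃+ (Fin m → ZMod p))) :
    d ≤ m :=
  stmt_2_general d p n m hp hn K hfree hquot
end

section
/- Let H = (Z_2)^7/⟨(1,...,1)⟩ ≅ (Z_2)^6 with canonical generators φ_1,...,φ_7. The subgroup K = ⟨φ_1φ_2φ_4, φ_1φ_3φ_5, φ_2φ_3φ_6⟩ satisfies: (i) H/K ≅ (Z_2)^3; (ii) K contains no nontrivial element of the form φ_k or φ_iφ_j for 1 ≤ i < j ≤ 7. -/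
open scoped BigOperators

/-- The subgroup `K = ⟨φ_1φ_2φ_4, φ_1φ_3φ_5, φ_2φ_3φ_6⟩` of `H = (Z_2)^7/⟨(1,…,1)⟩`
(indices 0-based). -/
def K4 : AddSubgroup (GFGroup 2 6) :=
  AddSubgroup.closure
    { gen 2 6 0 + gen 2 6 1 + gen 2 6 3,
      gen 2 6 0 + gen 2 6 2 + gen 2 6 4,
      gen 2 6 1 + gen 2 6 2 + gen 2 6 5 }

/-!
The group `H/K` is read off through the syndrome map of the Hamming `[7,4]` code,
`H → (Z_2)^3`, `φ_i ↦ c_i`, where `c_1, …, c_7` are the seven nonzero vectors of `(Z_2)^3`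
ordered so that `c_1 + c_2 + c_4 = c_1 + c_3 + c_5 = c_2 + c_3 + c_6 = 0`. It kills the diagonal
(the `c_i` sum to zero) and the generators of `K`, it is onto, and a finite check shows that its
kernel is exactly `K`; hence `H/K ≅ (Z_2)^3`. Since the `c_i` are nonzero and pairwise distinct,
neither `φ_k` nor `φ_iφ_j` has zero syndrome, so none of them lies in `K`.
-/

open Matrix

theorem sum_ne_zero_of_card_le_two {ι M : Type*} [AddCommGroup M] [Module (ZMod 2) M]
    {c : ι → M} (hc : Function.Injective c) (hc0 : ∀ i, c i ≠ 0)
    {s : Finset ι} (hs : s.Nonempty) (hcard : s.card ≤ 2) : ∑ i ∈ s, c i ≠ 0 := by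
  classical
  obtain hone | htwo : s.card = 1 ∨ s.card = 2 := by have := hs.card_pos; omega
  · obtain ⟨i, rfl⟩ := Finset.card_eq_one.1 hone
    simpa using hc0 i
  · obtain ⟨i, j, hij, rfl⟩ := Finset.card_eq_two.1 htwo
    rw [Finset.sum_pair hij, Ne, add_eq_zero_iff_eq_neg, ZModModule.neg_eq_self]
    exact hij ∘ @hc i j

theorem IsForbidden.exists_eq_sum_gen {n d : ℕ} {x : GFGroup 2 n} (hx : IsForbidden 2 n d x) :
    ∃ s : Finset (Fin (n + 1)), s.Nonempty ∧ s.card ≤ d ∧ x = ∑ i ∈ s, gen 2 n i := by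
  obtain ⟨s, l, hs, hcard, hl, rfl⟩ := hx
  refine ⟨s, hs, hcard, ?_⟩
  have hl1 : ∀ i ∈ s, l i = 1 := fun i hi =>
    (by decide : ∀ a : ZMod 2, a ≠ 0 → a = 1) _ (hl i hi)
  have hvec : (fun i => if i ∈ s then l i else 0) = ∑ i ∈ s, Pi.single i (1 : ZMod 2) := by
    ext j
    rw [Finset.sum_apply, Finset.sum_pi_single]
    split_ifs with hj
    exacts [hl1 j hj, rfl]
  rw [hvec]
  exact map_sum (QuotientAddGroup.mk' _) _ _

theorem not_isForbidden_two_of_map_eq_zero {n : ℕ} {M : Type*} [AddCommGroup M]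
    [Module (ZMod 2) M] (f : GFGroup 2 n →+ M) (hf : Function.Injective fun i => f (gen 2 n i))
    (hf0 : ∀ i, f (gen 2 n i) ≠ 0) {x : GFGroup 2 n} (hx : f x = 0) : ¬ IsForbidden 2 n 2 x := by
  intro hforb
  obtain ⟨s, hs, hcard, rfl⟩ := hforb.exists_eq_sum_gen
  rw [map_sum] at hx
  exact sum_ne_zero_of_card_le_two hf hf0 hs hcard hx

def hammingCheck : Matrix (Fin 3) (Fin 7) (ZMod 2) :=
  !![1, 0, 0, 1, 1, 0, 1;
     0, 1, 0, 1, 0, 1, 1;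
     0, 0, 1, 0, 1, 1, 1]

-- After removing `v 6` times the diagonal, the coefficients of the three relators are the
-- coordinates `3, 4, 5`.
set_option maxRecDepth 4000 in
theorem eq_of_hammingCheck_mulVec_eq_zero :
    ∀ v : Fin 7 → ZMod 2, hammingCheck *ᵥ v = 0 →
      v = v 6 • (fun _ => 1) + (v 3 + v 6) • (Pi.single 0 1 + Pi.single 1 1 + Pi.single 3 1) +
        (v 4 + v 6) • (Pi.single 0 1 + Pi.single 2 1 + Pi.single 4 1) +
        (v 5 + v 6) • (Pi.single 1 1 + Pi.single 2 1 + Pi.single 5 1) := by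
  decide

def syndrome : GFGroup 2 6 →+ (Fin 3 → ZMod 2) :=
  QuotientAddGroup.lift (diagSub 2 6) (mulVecLin hammingCheck).toAddMonoidHom
    (AddSubgroup.zmultiples_le.2 (by rw [AddMonoidHom.mem_ker]; decide))

theorem syndrome_gen (i : Fin 7) : syndrome (gen 2 6 i) = hammingCheck.col i :=
  mulVec_single_one hammingCheck i

theorem syndrome_gen_injective : Function.Injective fun i => syndrome (gen 2 6 i) := by
  simp only [syndrome_gen]
  decide

theorem syndrome_gen_ne_zero (i : Fin 7) : syndrome (gen 2 6 i) ≠ 0 := by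
  rw [syndrome_gen]
  revert i
  decide

theorem syndrome_surjective : Function.Surjective syndrome := by
  have h : ∀ w : Fin 3 → ZMod 2, hammingCheck *ᵥ ![w 0, w 1, w 2, 0, 0, 0, 0] = w := by decide
  exact fun w => ⟨QuotientAddGroup.mk ![w 0, w 1, w 2, 0, 0, 0, 0], h w⟩

theorem ker_syndrome : syndrome.ker = K4 := by
  refine le_antisymm (fun x hx => ?_) ((AddSubgroup.closure_le _).2 ?_)
  · obtain ⟨v, rfl⟩ := QuotientAddGroup.mk_surjective x
    -- the preimage of `K` in `(Z_2)^7`, which is closed under `Z_2`-scalars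
    let L := AddSubgroup.toZModSubmodule 2 (K4.comap (QuotientAddGroup.mk' (diagSub 2 6)))
    change v ∈ L
    rw [eq_of_hammingCheck_mulVec_eq_zero v hx]
    refine add_mem (add_mem (add_mem ?_ ?_) ?_) ?_ <;> refine L.smul_mem _ ?_
    · change QuotientAddGroup.mk (s := diagSub 2 6) (fun _ => 1) ∈ K4
      convert zero_mem K4
      exact (QuotientAddGroup.eq_zero_iff _).2 (AddSubgroup.mem_zmultiples _)
    · exact AddSubgroup.subset_closure (Or.inl rfl)
    · exact AddSubgroup.subset_closure (Or.inr (Or.inl rfl))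
    · exact AddSubgroup.subset_closure (Or.inr (Or.inr rfl))
  · rintro _ (rfl | rfl | rfl) <;>
      simp only [SetLike.mem_coe, AddMonoidHom.mem_ker, map_add, syndrome_gen] <;> decide

/-- `H/K ≅ (Z_2)^3` and `K` contains no nontrivial element of the
form `φ_k` or `φ_iφ_j`. -/
theorem stmt_4 :
    Nonempty ((GFGroup 2 6 ⧸ K4) ≃+ (Fin 3 → ZMod 2)) ∧
    ∀ x ∈ K4, IsForbidden 2 6 2 x → x = 0 := by
  refine ⟨⟨(QuotientAddGroup.quotientAddEquivOfEq ker_syndrome.symm).trans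
      (QuotientAddGroup.quotientKerEquivOfSurjective _ syndrome_surjective)⟩, fun x hx hforb => ?_⟩
  rw [← ker_syndrome] at hx
  exact (not_isForbidden_two_of_map_eq_zero syndrome syndrome_gen_injective syndrome_gen_ne_zero
    hx hforb).elim
end

section
/- For every n ≥ 6, there exists a subgroup K of H = (Z_2)^{n+1}/⟨(1,...,1)⟩ with H/K ≅ (Z_2)^{n-2} such that K contains no nontrivial element of the form φ_k or φ_iφ_j (1 ≤ i < j ≤ n+1). -/
open scoped BigOperators

/-!
A surjection `θ : H → W` onto an `𝔽₂`-vector space is the same as a family of spanning vectors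
`c i = θ φ_i` with `∑ c i = 0`, and `ker θ` contains no `φ_k` and no `φ_i φ_j` exactly when the
`c i` are nonzero and pairwise distinct, since in characteristic two `c i + c j = 0` means
`c i = c j`. For `W = 𝔽₂^{n-2}` take the standard basis together with the indicators of the
complements of `{a}`, `{b}` and `{a, b}` for two coordinates `a ≠ b`: these three add up to the
all-ones vector, and each has at least two nonzero coordinates as soon as `n - 2 ≥ 4`.
(Three disjoint blocks of size `≥ 2` would need `n - 2 ≥ 6`.)
-/

open Function Submodule

section Admissible

variable {κ W : Type*} [Fintype κ] [AddCommGroup W] [Module (ZMod 2) W]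

structure IsAdmissible (c : κ → W) : Prop where
  sum_eq_zero : ∑ i, c i = 0
  span_eq_top : span (ZMod 2) (Set.range c) = ⊤
  ne_zero : ∀ i, c i ≠ 0
  injective : Injective c

theorem IsAdmissible.comp_equiv {κ' : Type*} [Fintype κ'] {c : κ → W} (hc : IsAdmissible c)
    (e : κ' ≃ κ) : IsAdmissible (c ∘ e) where
  sum_eq_zero := (e.sum_comp c).trans hc.sum_eq_zero
  span_eq_top := by rw [Set.range_comp, e.range_eq_univ, Set.image_univ, hc.span_eq_top]
  ne_zero i := hc.ne_zero (e i)
  injective := hc.injective.comp e.injective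

end Admissible

section GenLift

variable {n : ℕ} {W : Type*} [AddCommGroup W] [Module (ZMod 2) W]

noncomputable def genLift (c : Fin (n + 1) → W) (hc : ∑ i, c i = 0) : GFGroup 2 n →+ W :=
  QuotientAddGroup.lift (diagSub 2 n) (Fintype.linearCombination (ZMod 2) c).toAddMonoidHom <| by
    rw [diagSub, AddSubgroup.zmultiples_le, AddMonoidHom.mem_ker]
    simpa [Fintype.linearCombination_apply] using hc

variable {c : Fin (n + 1) → W} {hc : ∑ i, c i = 0}

theorem genLift_mk (v : GFVec 2 n) : genLift c hc (QuotientAddGroup.mk v) = ∑ i, v i • c i :=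
  QuotientAddGroup.lift_mk _ _ _

theorem genLift_surjective (hspan : span (ZMod 2) (Set.range c) = ⊤) :
    Surjective (genLift c hc) := by
  intro w
  obtain ⟨v, rfl⟩ := (span_range_eq_top_iff_surjective_fintypeLinearCombination _ _).mp hspan w
  exact ⟨QuotientAddGroup.mk v, genLift_mk v⟩

theorem genLift_ne_zero_of_isForbidden (hne : ∀ i, c i ≠ 0) (hinj : Injective c)
    {x : GFGroup 2 n} (hx : IsForbidden 2 n 2 x) : genLift c hc x ≠ 0 := by
  obtain ⟨s, l, hs, hcard, hl, rfl⟩ := hx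
  have hl_one : ∀ i ∈ s, l i = 1 := fun i hi =>
    Fin.eq_one_of_ne_zero (l i) (hl i hi)
  have hsum : genLift c hc (QuotientAddGroup.mk fun i => if i ∈ s then l i else 0)
      = ∑ i ∈ s, c i := by
    rw [genLift_mk]
    simp only [ite_smul, zero_smul, Finset.sum_ite_mem, Finset.univ_inter]
    exact Finset.sum_congr rfl fun i hi => by rw [hl_one i hi, one_smul]
  rw [hsum]
  obtain hs1 | hs2 : s.card = 1 ∨ s.card = 2 := by have := hs.card_pos; omega
  · obtain ⟨a, rfl⟩ := Finset.card_eq_one.mp hs1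
    simpa using hne a
  · obtain ⟨a, b, hab, rfl⟩ := Finset.card_eq_two.mp hs2
    rw [Finset.sum_pair hab, ← ZModModule.sub_eq_add, sub_ne_zero]
    exact hinj.ne hab

theorem exists_addSubgroup_of_isAdmissible (hadm : IsAdmissible c) :
    ∃ K : AddSubgroup (GFGroup 2 n), Nonempty ((GFGroup 2 n ⧸ K) ≃+ W) ∧
      ∀ x ∈ K, IsForbidden 2 n 2 x → x = 0 :=
  ⟨(genLift c hadm.sum_eq_zero).ker,
    ⟨QuotientAddGroup.quotientKerEquivOfSurjective _ (genLift_surjective hadm.span_eq_top)⟩,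
    fun _ hx hf => absurd hx (genLift_ne_zero_of_isForbidden hadm.ne_zero hadm.injective hf)⟩

end GenLift

section ComplementColumns

variable {ι : Type*} [DecidableEq ι]

def complMask (t : Finset ι) : ι → ZMod 2 := fun j => if j ∈ t then 0 else 1

theorem complMask_injective : Injective (complMask (ι := ι)) := by
  intro s t h
  ext j
  have := congrFun h j
  by_cases hs : j ∈ s <;> by_cases ht : j ∈ t <;> simp_all [complMask]

theorem complMask_add_complMask_add_complMask_pair {a b : ι} (hab : a ≠ b) :
    complMask {a} + complMask {b} + complMask {a, b} = 1 := by
  ext j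
  by_cases ha : j = a <;> by_cases hb : j = b <;>
    simp [complMask, ha, hb, hab, hab.symm, ZModModule.add_self]

theorem complMask_ne_zero {t : Finset ι} {a : ι} (ha : a ∉ t) : complMask t ≠ 0 :=
  fun h => by simpa [complMask, ha] using congrFun h a

theorem single_ne_complMask {t : Finset ι} {a b : ι} (hab : a ≠ b) (ha : a ∉ t) (hb : b ∉ t)
    (k : ι) : Pi.single k 1 ≠ complMask t := by
  intro h
  have hka := congrFun h a
  have hkb := congrFun h b
  simp only [complMask, ha, hb, if_false, Pi.single_apply] at hka hkb
  split_ifs at hka hkb <;> simp_all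

variable [Fintype ι]

noncomputable def columns (a b : ι) : ι ⊕ Fin 3 → ι → ZMod 2 :=
  Sum.elim (Pi.basisFun (ZMod 2) ι) (complMask ∘ ![{a}, {b}, {a, b}])

theorem isAdmissible_columns (f : Fin 4 → ι) (hf : Injective f) :
    IsAdmissible (columns (f 0) (f 1)) := by
  set t : Fin 3 → Finset ι := ![{f 0}, {f 1}, {f 0, f 1}]
  have ht : Injective t := by
    intro i j; fin_cases i <;> fin_cases j <;> simp [t, hf.eq_iff, Finset.ext_iff]
  have hf2 (i : Fin 3) : f 2 ∉ t i := by fin_cases i <;> simp [t, hf.eq_iff]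
  have hf3 (i : Fin 3) : f 3 ∉ t i := by fin_cases i <;> simp [t, hf.eq_iff]
  refine ⟨?sum_eq_zero, ?span_eq_top, ?ne_zero, ?injective⟩
  case sum_eq_zero =>
    have hbasis : ∑ k, Pi.basisFun (ZMod 2) ι k = 1 := by
      simpa using Finset.univ_sum_single (1 : ι → ZMod 2)
    rw [Fintype.sum_sum_type, columns]
    simp only [Sum.elim_inl, Sum.elim_inr, comp_apply, Fin.sum_univ_three, hbasis,
      Matrix.cons_val_zero, Matrix.cons_val_one, Matrix.cons_val_two, Matrix.tail_cons,
      Matrix.head_cons]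
    rw [complMask_add_complMask_add_complMask_pair (hf.ne (by decide : (0 : Fin 4) ≠ 1)),
      ZModModule.add_self]
  case span_eq_top =>
    refine eq_top_mono (span_mono ?_) (Pi.basisFun (ZMod 2) ι).span_eq
    rw [columns, Set.Sum.elim_range]
    exact Set.subset_union_left
  case ne_zero =>
    rintro (k | i)
    · exact (Pi.basisFun (ZMod 2) ι).ne_zero k
    · exact complMask_ne_zero (hf2 i)
  case injective =>
    exact (Pi.basisFun (ZMod 2) ι).injective.sumElim (complMask_injective.comp ht)
      fun k i => by
        rw [Pi.basisFun_apply]; exact single_ne_complMask (hf.ne (by decide)) (hf2 i) (hf3 i) k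

end ComplementColumns

/-- for every `n ≥ 6` there is a subgroup `K` of `H = (Z_2)^{n+1}/⟨(1,…,1)⟩`
with `H/K ≅ (Z_2)^{n-2}` avoiding all nontrivial `φ_k` and `φ_iφ_j`. -/
theorem stmt_7 (n : ℕ) (hn : 6 ≤ n) :
    ∃ K : AddSubgroup (GFGroup 2 n),
      Nonempty ((GFGroup 2 n ⧸ K) ≃+ (Fin (n - 2) → ZMod 2)) ∧
      ∀ x ∈ K, IsForbidden 2 n 2 x → x = 0 := by
  have hcols :=
    isAdmissible_columns (Fin.castLE (show 4 ≤ n - 2 by omega)) (Fin.castLE_injective _)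
  exact exists_addSubgroup_of_isAdmissible <| hcols.comp_equiv <|
    (finCongr (by omega : n + 1 = n - 2 + 3)).trans finSumFinEquiv.symm
end

section
/- For every even m ≥ 4, setting n = (m-1)(m+2)/2, there exists a subgroup K of H = (Z_2)^{n+1}/⟨(1,...,1)⟩ with H/K ≅ (Z_2)^m such that K contains no nontrivial element of the form φ_k or φ_iφ_j. -/
open scoped BigOperators

/-!
Index the `n + 1 = m (m + 1) / 2` generators of `H` by `Sym2 (Fin m)` and send `φ_{s(a,b)}`
to the indicator vector of `{a, b}` in `(Z_2)^m`. Each coordinate is hit by exactly `m` of these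
vectors, so for even `m` they sum to zero and the assignment descends to a homomorphism
`θ : H → (Z_2)^m`, onto since the basis vectors occur. The images are nonzero and pairwise
distinct, so in characteristic `2` neither `φ_k` nor `φ_i φ_j` lies in `K = ker θ`.
-/

section Lift

variable (p : ℕ) {n : ℕ} {V : Type*} [AddCommGroup V] [Module (ZMod p) V]

noncomputable def liftGen (v : Fin (n + 1) → V) (hv : ∑ i, v i = 0) : GFGroup p n →+ V :=
  QuotientAddGroup.lift (diagSub p n) (Fintype.linearCombination (ZMod p) v).toAddMonoidHom <|
    AddSubgroup.zmultiples_le.2 <| by simpa [Fintype.linearCombination_apply] using hv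

variable (v : Fin (n + 1) → V) (hv : ∑ i, v i = 0)

theorem liftGen_mk (w : GFVec p n) :
    liftGen p v hv (QuotientAddGroup.mk w) = ∑ i, w i • v i :=
  rfl

theorem liftGen_mk_ite (s : Finset (Fin (n + 1))) (l : Fin (n + 1) → ZMod p) :
    liftGen p v hv (QuotientAddGroup.mk fun i => if i ∈ s then l i else 0) =
      ∑ i ∈ s, l i • v i := by
  simp only [liftGen_mk, ite_smul, zero_smul, Finset.sum_ite_mem, Finset.univ_inter]

theorem liftGen_surjective (hspan : Submodule.span (ZMod p) (Set.range v) = ⊤) :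
    Function.Surjective (liftGen p v hv) := by
  intro y
  obtain ⟨w, rfl⟩ := (span_range_eq_top_iff_surjective_fintypeLinearCombination _ v).1 hspan y
  exact ⟨QuotientAddGroup.mk w, rfl⟩

end Lift

section Forbidden

variable {n : ℕ} {V : Type*} [AddCommGroup V] [Module (ZMod 2) V]

theorem liftGen_ne_zero_of_isForbidden (v : Fin (n + 1) → V) (hv : ∑ i, v i = 0)
    (hv0 : ∀ i, v i ≠ 0) (hinj : Function.Injective v) {x : GFGroup 2 n}
    (hx : IsForbidden 2 n 2 x) : liftGen 2 v hv x ≠ 0 := by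
  obtain ⟨s, l, hne, hcard, hl, rfl⟩ := hx
  have hl1 : ∀ i ∈ s, l i = 1 := fun i hi =>
    (show ∀ c : ZMod 2, c ≠ 0 → c = 1 by decide) _ (hl i hi)
  rw [liftGen_mk_ite, Finset.sum_congr rfl fun i hi => by rw [hl1 i hi, one_smul]]
  obtain hcard1 | hcard2 : s.card = 1 ∨ s.card = 2 := by have := hne.card_pos; omega
  · obtain ⟨a, rfl⟩ := Finset.card_eq_one.1 hcard1
    simpa using hv0 a
  · obtain ⟨a, b, hab, rfl⟩ := Finset.card_eq_two.1 hcard2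
    rw [Finset.sum_pair hab]
    intro h
    refine hab (hinj ?_)
    calc v a = -v b := eq_neg_of_add_eq_zero_left h
      _ = (-1 : ZMod 2) • v b := (neg_one_smul _ _).symm
      _ = v b := by rw [show (-1 : ZMod 2) = 1 from rfl, one_smul]

end Forbidden

section Sym2Indicator

variable {α : Type*} [DecidableEq α] (R : Type*) [Semiring R]

/-- The diagonal `s(a, a)` gives the basis vector `e_a` and `s(a, b)` with `a ≠ b` gives
`e_a + e_b`: these are the images of the paper's generators `φ_k`. -/
def sym2Indicator (z : Sym2 α) : α → R := fun a => if a ∈ z then 1 else 0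

theorem sym2Indicator_diag (a : α) : sym2Indicator R s(a, a) = Pi.single a 1 := by
  ext b
  simp [sym2Indicator, Pi.single_apply]

variable {R}

theorem sym2Indicator_ne_zero [Nontrivial R] (z : Sym2 α) : sym2Indicator R z ≠ 0 := by
  induction z using Sym2.ind with
  | _ a b => exact fun h => by simpa [sym2Indicator] using congrFun h a

theorem sym2Indicator_injective [Nontrivial R] :
    Function.Injective (sym2Indicator (α := α) R) :=
  fun z w h => Sym2.ext fun a => by
    have := congrFun h a
    by_cases hz : a ∈ z <;> by_cases hw : a ∈ w <;> simp_all [sym2Indicator]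

theorem span_range_sym2Indicator [Fintype α] :
    Submodule.span R (Set.range (sym2Indicator (α := α) R)) = ⊤ := by
  refine eq_top_iff.2 <| (Pi.basisFun R α).span_eq.symm.le.trans <| Submodule.span_mono ?_
  rintro _ ⟨a, rfl⟩
  exact ⟨s(a, a), by simp [sym2Indicator_diag]⟩

theorem card_filter_mem_sym2 [Fintype α] (a : α) :
    (Finset.univ.filter fun z : Sym2 α => a ∈ z).card = Fintype.card α := by
  have : (Finset.univ.filter fun z : Sym2 α => a ∈ z) = Finset.univ.image fun b => s(a, b) := by
    ext z
    simp [Sym2.mem_iff_exists, eq_comm]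
  rw [this, Finset.card_image_of_injective _ fun b c => Sym2.congr_right.1, Finset.card_univ]

theorem sum_sym2Indicator [Fintype α] :
    ∑ z : Sym2 α, sym2Indicator R z = fun _ => (Fintype.card α : R) := by
  ext a
  simp only [Finset.sum_apply, sym2Indicator, Finset.sum_boole, card_filter_mem_sym2]

end Sym2Indicator

theorem card_sym2_fin_eq_succ {m n : ℕ} (hm : 1 ≤ m) (hn : 2 * n = (m - 1) * (m + 2)) :
    Fintype.card (Sym2 (Fin m)) = n + 1 := by
  obtain ⟨k, rfl⟩ : ∃ k, m = k + 1 := ⟨m - 1, by omega⟩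
  rw [Sym2.card, Fintype.card_fin, Nat.choose_two_right]
  refine Nat.div_eq_of_eq_mul_left two_pos ?_
  simp only [Nat.add_sub_cancel] at hn ⊢
  nlinarith

/-- for every even `m ≥ 4`, with `n = (m-1)(m+2)/2`, there is a subgroup
`K` of `H = (Z_2)^{n+1}/⟨(1,…,1)⟩` with `H/K ≅ (Z_2)^m` avoiding all nontrivial
`φ_k` and `φ_iφ_j`. -/
theorem stmt_8 (m n : ℕ) (hm : 4 ≤ m) (heven : Even m)
    (hn : 2 * n = (m - 1) * (m + 2)) :
    ∃ K : AddSubgroup (GFGroup 2 n),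
      Nonempty ((GFGroup 2 n ⧸ K) ≃+ (Fin m → ZMod 2)) ∧
      ∀ x ∈ K, IsForbidden 2 n 2 x → x = 0 := by
  let e : Fin (n + 1) ≃ Sym2 (Fin m) :=
    Fintype.equivOfCardEq (by rw [Fintype.card_fin, card_sym2_fin_eq_succ (by omega) hn])
  let v := sym2Indicator (ZMod 2) ∘ e
  have hv : ∑ i, v i = 0 := by
    rw [Fintype.sum_equiv e v (sym2Indicator (ZMod 2)) fun _ => rfl, sum_sym2Indicator,
      Fintype.card_fin, ZMod.natCast_eq_zero_iff_even.2 heven]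
    rfl
  have hspan : Submodule.span (ZMod 2) (Set.range v) = ⊤ := by
    rw [e.surjective.range_comp, span_range_sym2Indicator]
  refine ⟨(liftGen 2 v hv).ker,
    ⟨QuotientAddGroup.quotientKerEquivOfSurjective _ (liftGen_surjective 2 v hv hspan)⟩,
    fun x hx hforb => absurd hx <| liftGen_ne_zero_of_isForbidden v hv
      (fun i => sym2Indicator_ne_zero (e i)) (sym2Indicator_injective.comp e.injective) hforb⟩
end
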